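/- Let e ≥ 3 be an integer and let u ∈ ℂ⟦X⟧ have nonzero constant coefficient. Set z = X^e · u and let z′ be its formal derivative. Then there exists g ∈ ℂ⟦X⟧ such that z²·(z − 1)²·g = (z′)³, and the order of g equals e − 3. -/

import Mathlib

/-!
Writing `z = X^e u`, we have `z′ = X^(e-1) w` with `w(0) = e·u(0) ≠ 0`, and `z - 1` is a unit
since `z(0) = 0`. Hence `z²(z-1)² = X^(2e)·(unit)` and `(z′)³ = X^(2e + (e-3))·(unit)`, so the
quotient is `X^(e-3)` times a unit.
-/

open PowerSeries

namespace PowerSeries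

variable {R : Type*}

theorem derivative_X_pow_succ_mul [CommSemiring R] (n : ℕ) (u : R⟦X⟧) :
    d⁄dX R (X ^ (n + 1) * u) = X ^ n * (((n + 1 : ℕ) : R⟦X⟧) * u + X * d⁄dX R u) := by
  rw [Derivation.leibniz, derivative_pow, derivative_X, smul_eq_mul, smul_eq_mul]
  push_cast
  ring

theorem exists_X_pow_mul_unit_mul_eq [CommRing R] [IsDomain R] {a b : R⟦X⟧}
    (ha : IsUnit a) (hb : IsUnit b) (i n : ℕ) :
    ∃ g : R⟦X⟧, X ^ i * a * g = X ^ (i + n) * b ∧ g.order = n := by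
  obtain ⟨c, rfl⟩ : a ∣ b := ha.dvd
  have hc : IsUnit c := isUnit_of_mul_isUnit_right hb
  refine ⟨X ^ n * c, by ring, ?_⟩
  rw [order_mul, order_X_pow, order_zero_of_unit hc, add_zero]

end PowerSeries

/-- For `z = X^e · u` with `u(0) ≠ 0` and `e ≥ 3`, the series `g` with
`z²(z-1)²g = (z′)³` exists and has order exactly `e - 3`: the pullback of the
3-tensor `(dz/z) ⊗ (dz/(z-1)) ⊗ (dz/(z(z-1)))` is regular and nonzero. -/
theorem pullback_three_tensor_order (e : ℕ) (he : 3 ≤ e) (u : PowerSeries ℂ)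
    (hu : PowerSeries.constantCoeff u ≠ 0) :
    ∃ g : PowerSeries ℂ,
      (PowerSeries.X ^ e * u) ^ 2 * ((PowerSeries.X ^ e * u) - 1) ^ 2 * g =
        (PowerSeries.derivative ℂ (PowerSeries.X ^ e * u)) ^ 3 ∧
      g.order = (e - 3 : ℕ) := by
  obtain ⟨m, rfl⟩ : ∃ m, e = m + 2 + 1 := ⟨e - 3, by omega⟩
  set z : ℂ⟦X⟧ := X ^ (m + 2 + 1) * u
  set w : ℂ⟦X⟧ := ((m + 3 : ℕ) : ℂ⟦X⟧) * u + X * d⁄dX ℂ u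
  have hz' : d⁄dX ℂ z = X ^ (m + 2) * w := derivative_X_pow_succ_mul (m + 2) u
  have hw : IsUnit w := by
    have hw0 : constantCoeff w = (m + 3 : ℕ) * constantCoeff u := by
      simp only [w, map_add, map_mul, map_natCast, constantCoeff_X, zero_mul, add_zero]
    rw [isUnit_iff_constantCoeff, isUnit_iff_ne_zero, hw0]
    exact mul_ne_zero (Nat.cast_ne_zero.2 (by omega)) hu
  have hz1 : IsUnit (z - 1) := by
    rw [isUnit_iff_constantCoeff]
    simp [z]
  have hu' : IsUnit u := isUnit_iff_constantCoeff.2 (isUnit_iff_ne_zero.2 hu)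
  obtain ⟨g, hg, hord⟩ :=
    exists_X_pow_mul_unit_mul_eq ((hu'.pow 2).mul (hz1.pow 2)) (hw.pow 3) (2 * (m + 3)) m
  refine ⟨g, ?_, by simpa using hord⟩
  rw [hz']
  convert hg using 1 <;> ring
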